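/- arXiv:1711.07847 — 5 statements merged into one kernel-verified Lean document; each statement's English description precedes it below -/
import Mathlib

section
/- Let p be an odd prime, let ζ = exp(2πi/p) ∈ ℂ, and let 2^{1/p} be the real positive p-th root of 2. For every integer k with 1 ≤ k < p and every choice of integers 0 ≤ j_1 < j_2 < … < j_k ≤ p − 1, the product ∏_{l=1}^{k} (2^{1/p}·ζ^{j_l} − 1) is different from 1. In other words, no product of the numbers σ(2^{1/p} − 1), where σ ranges over a nonempty proper subset of the p embeddings of ℚ(2^{1/p}) into ℂ, equals 1. -/
/-!
Let `F = ℚ(ζ)`, of degree `p - 1` over `ℚ`. Since `2` is not a `p`-th power in `ℚ` and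
`p ∤ [F : ℚ]`, it is not a `p`-th power in `F` either, so `X ^ p - 2` stays irreducible over
`F` and `2^(1/p)` has degree `p` over `F`. On the other hand `∏_{j ∈ J} (ζ^j X - 1) - 1` is a
nonzero polynomial over `F` of degree `|J| < p` that would vanish at `2^(1/p)`.
-/

open Polynomial IntermediateField

theorem Rat.pow_ne_two {n : ℕ} (hn : 2 ≤ n) (b : ℚ) : b ^ n ≠ 2 := by
  intro hb
  have hval := congrArg (padicValRat 2) hb
  have h2 : padicValRat 2 2 = 1 := by simpa using padicValRat.self (p := 2) one_lt_two
  rw [padicValRat.pow, h2] at hval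
  have := Int.eq_one_of_dvd_one (Int.natCast_nonneg n) ⟨_, hval.symm⟩
  omega

section RootsOfPrimeDegree

variable {K L : Type*} [Field K] [Field L] [Algebra K L] {p : ℕ}

theorem minpoly_eq_X_pow_sub_C_of_pow_eq (hp : p.Prime) {a : K} (ha : ∀ b : K, b ^ p ≠ a)
    {x : L} (hx : x ^ p = algebraMap K L a) : minpoly K x = X ^ p - C a := by
  refine (minpoly.eq_of_irreducible_of_monic (X_pow_sub_C_irreducible_of_prime hp ha) ?_
    (monic_X_pow_sub_C a hp.ne_zero)).symm
  simp [hx]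

theorem pow_ne_algebraMap_of_not_dvd_finrank [FiniteDimensional K L] (hp : p.Prime) {a : K}
    (ha : ∀ b : K, b ^ p ≠ a) (hL : ¬ p ∣ Module.finrank K L) (x : L) :
    x ^ p ≠ algebraMap K L a := by
  intro hx
  have hdvd := minpoly.degree_dvd (Algebra.IsIntegral.isIntegral (R := K) x)
  rw [minpoly_eq_X_pow_sub_C_of_pow_eq hp ha hx, natDegree_X_pow_sub_C] at hdvd
  exact hL hdvd

end RootsOfPrimeDegree

theorem natDegree_prod_C_mul_X_sub_one {F ι : Type*} [Field F] (J : Finset ι) {w : ι → F}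
    (hw : ∀ j, w j ≠ 0) : (∏ j ∈ J, (C (w j) * X - 1)).natDegree = J.card := by
  have hdeg : ∀ j, (C (w j) * X - 1 : F[X]).natDegree = 1 := fun j => by
    simpa [sub_eq_add_neg] using natDegree_linear (b := -1) (hw j)
  rw [natDegree_prod _ _ fun j _ h => by simpa [h] using hdeg j, Finset.sum_congr rfl
    fun j _ => hdeg j, Finset.sum_const, smul_eq_mul, mul_one]

theorem prod_algebraMap_mul_sub_one_ne_one {F A ι : Type*} [Field F] [CommRing A] [Algebra F A]
    {x : A} {J : Finset ι} {w : ι → F} (hw : ∀ j, w j ≠ 0) (hne : J.Nonempty)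
    (hcard : J.card < (minpoly F x).natDegree) :
    ∏ j ∈ J, (algebraMap F A (w j) * x - 1) ≠ 1 := by
  intro hprod
  set P : F[X] := ∏ j ∈ J, (C (w j) * X - 1)
  have hP : P.natDegree = J.card := natDegree_prod_C_mul_X_sub_one J hw
  have hP1 : (P - 1).natDegree = J.card := by
    rw [natDegree_sub_eq_left_of_natDegree_lt (by simpa [hP] using hne.card_pos), hP]
  have hroot : aeval x (P - 1) = 0 := by
    simp [P, map_prod, hprod]
  have hQ : P - 1 ≠ 0 := fun h => by simp [h, hne.card_pos.ne] at hP1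
  have := natDegree_le_natDegree (minpoly.degree_le_of_ne_zero F x hQ hroot)
  omega

theorem finrank_adjoin_primitiveRoot_prime {K : Type*} [Field K] [CharZero K] {p : ℕ}
    (hp : p.Prime) {ζ : K}
    (hζ : IsPrimitiveRoot ζ p) : Module.finrank ℚ ℚ⟮ζ⟯ = p - 1 := by
  rw [adjoin.finrank (hζ.isIntegral hp.pos).tower_top, ← cyclotomic_eq_minpoly_rat hζ hp.pos,
    natDegree_cyclotomic, Nat.totient_prime hp]

theorem stmt4_general (p : ℕ) (hp : p.Prime)
    (ζ : ℂ) (hζ : ζ = Complex.exp (2 * Real.pi * Complex.I / p))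
    (c : ℝ) (hc : c = (2 : ℝ) ^ ((1 : ℝ) / p))
    (J : Finset ℕ) (hne : J.Nonempty) (hcard : J.card < p) :
    ∏ j ∈ J, ((c : ℂ) * ζ ^ j - 1) ≠ 1 := by
  have hζp : IsPrimitiveRoot ζ p := hζ ▸ Complex.isPrimitiveRoot_exp p hp.ne_zero
  have hcp : (c : ℂ) ^ p = 2 := by
    rw [hc, one_div]; exact_mod_cast Real.rpow_inv_natCast_pow zero_le_two hp.ne_zero
  let F := ℚ⟮ζ⟯
  have : FiniteDimensional ℚ F := adjoin.finiteDimensional (hζp.isIntegral hp.pos).tower_top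
  have hF : ¬ p ∣ Module.finrank ℚ F := by
    rw [finrank_adjoin_primitiveRoot_prime hp hζp]
    exact Nat.not_dvd_of_pos_of_lt (Nat.sub_pos_of_lt hp.one_lt) (Nat.sub_lt hp.pos one_pos)
  have h2F : ∀ b : F, b ^ p ≠ 2 := by
    simpa using pow_ne_algebraMap_of_not_dvd_finrank hp (Rat.pow_ne_two hp.two_le) hF
  have hdeg : (minpoly F (c : ℂ)).natDegree = p := by
    rw [minpoly_eq_X_pow_sub_C_of_pow_eq hp h2F (by rw [map_ofNat]; exact hcp),
      natDegree_X_pow_sub_C]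
  have := prod_algebraMap_mul_sub_one_ne_one (A := ℂ) (x := (c : ℂ))
    (w := fun j => AdjoinSimple.gen ℚ ζ ^ j)
    (fun j => pow_ne_zero _ fun h =>
      hζp.ne_zero hp.ne_zero (by simpa using congrArg (algebraMap F ℂ) h)) hne (hdeg ▸ hcard)
  simpa [mul_comm] using this

/-- Let `p` be an odd prime, `ζ = exp(2πi/p) ∈ ℂ`, and `2^(1/p)` the real positive `p`-th
root of `2`. For every nonempty proper subset `J` of `{0, …, p−1}` (i.e. every choice of
`1 ≤ k < p` indices `0 ≤ j₁ < … < j_k ≤ p−1`), the product `∏_{j ∈ J} (2^(1/p)·ζ^j − 1)`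
is different from `1`. -/
theorem stmt4 (p : ℕ) (hp : p.Prime) (hodd : Odd p)
    (ζ : ℂ) (hζ : ζ = Complex.exp (2 * Real.pi * Complex.I / p))
    (c : ℝ) (hc : c = (2 : ℝ) ^ ((1 : ℝ) / p))
    (J : Finset ℕ) (hJ : J ⊆ Finset.range p) (hne : J.Nonempty) (hcard : J.card < p) :
    ∏ j ∈ J, ((c : ℂ) * ζ ^ j - 1) ≠ 1 :=
  stmt4_general p hp ζ hζ c hc J hne hcard
end

section
/- Let s, t ≥ 1 be integers, G a group, σ_1, …, σ_s : G → ℝ_{>0} group homomorphisms into the positive reals, and σ_{s+1}, …, σ_{s+t} : G → ℂ∖{0} group homomorphisms into the nonzero complex numbers; define σ_{s+t+j}(u) = conj(σ_{s+j}(u)) for 1 ≤ j ≤ t. Assume: (i) the functions u ↦ log σ_1(u), …, u ↦ log σ_s(u) are linearly independent over ℝ in the vector space of real-valued functions on G; (ii) for all u ∈ G and all 1 ≤ j ≤ t one has |σ_{s+j}(u)|^2 = (σ_1(u)·…·σ_s(u))^{−1/t}. Then for any subset I ⊆ {1, …, s+2t}: if ∏_{i∈I} σ_i(u) = 1 for all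 u ∈ G, then either I = ∅ or I = {1, …, s+2t}. -/
/-!
Apply `log ‖·‖` to a relation `∏_{i ∈ I} σᵢ = 1`. A real place `k ≤ s` contributes `log σₖ`, and by
the LCK condition every complex place contributes `-(1/2t) ∑_{k ≤ s} log σₖ`. If `a` complex places
lie in `I`, this gives `∑_{k ≤ s} ([k ∈ I] - a/2t) log σₖ = 0`, so linear independence forces
`[k ∈ I] = a/2t` for every `k ≤ s`. This constant is `0` or `1`: in the first case `I` contains no
place at all, in the second it contains every real place and all `2t` complex ones.
-/

open Finset

theorem Finset.sum_fin_eq_sum_Icc_one {M : Type*} [AddCommMonoid M] (s : ℕ) (g : ℕ → M) :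
    ∑ i : Fin s, g (i.1 + 1) = ∑ k ∈ Icc 1 s, g k := by
  rw [Fin.sum_univ_eq_sum_range (fun i => g (i + 1)), range_eq_Ico, sum_Ico_add', zero_add,
    Ico_add_one_right_eq_Icc]

theorem LinearIndependent.eq_zero_of_sum_Icc_one_smul_eq_zero {R M : Type*} [Ring R]
    [AddCommGroup M] [Module R M] {s : ℕ} {f : ℕ → M}
    (hf : LinearIndependent R fun i : Fin s => f (i.1 + 1)) {c : ℕ → R}
    (hc : ∑ k ∈ Icc 1 s, c k • f k = 0) {k : ℕ} (hk : k ∈ Icc 1 s) : c k = 0 := by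
  have hk' : k - 1 + 1 = k := by grind
  have := Fintype.linearIndependent_iff.mp hf (fun i => c (i.1 + 1))
    (by rwa [sum_fin_eq_sum_Icc_one s fun k => c k • f k]) ⟨k - 1, by grind⟩
  rwa [hk'] at this

theorem Real.log_eq_of_sq_eq_rpow {x y a : ℝ} (hx : 0 < x) (h : y ^ 2 = x ^ a) :
    Real.log y = a / 2 * Real.log x := by
  have := congrArg Real.log h
  rw [Real.log_pow, Real.log_rpow hx] at this
  push_cast at this
  linarith

theorem Finset.sum_log_norm_eq_zero_of_prod_eq_one {ι 𝕜 : Type*} [NormedField 𝕜]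
    {I : Finset ι} {z : ι → 𝕜} (h : ∏ i ∈ I, z i = 1) : ∑ i ∈ I, Real.log ‖z i‖ = 0 := by
  have hne : ∀ i ∈ I, z i ≠ 0 := prod_ne_zero_iff.mp (h ▸ one_ne_zero)
  rw [← Real.log_prod fun i hi => norm_ne_zero_iff.mpr (hne i hi), ← norm_prod, h, norm_one,
    Real.log_one]

theorem Finset.sum_eq_sum_ite_add_card_nsmul {ι M : Type*} [DecidableEq ι] [AddCommMonoid M]
    {A B I : Finset ι} (hAB : Disjoint A B) (hI : I ⊆ A ∪ B) {L : ι → M} {m : M}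
    (hB : ∀ i ∈ B, L i = m) :
    ∑ i ∈ I, L i = ∑ k ∈ A, (if k ∈ I then L k else 0) + #(I ∩ B) • m := by
  calc ∑ i ∈ I, L i = ∑ i ∈ I ∩ A, L i + ∑ i ∈ I ∩ B, L i := by
        rw [← sum_union (hAB.mono inter_subset_right inter_subset_right),
          ← inter_union_distrib_left, inter_eq_left.mpr hI]
    _ = _ := by
        rw [sum_ite_mem, inter_comm A I, sum_congr rfl fun i hi => hB i (mem_inter.mp hi).2,
          sum_const]

theorem Finset.eq_empty_or_eq_union_of_indicator_eq_card_div {ι : Type*} [DecidableEq ι]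
    {A B I : Finset ι} (hA : A.Nonempty) (hI : I ⊆ A ∪ B)
    (h : ∀ k ∈ A, (if k ∈ I then 1 else 0 : ℝ) = #(I ∩ B) / #B) : I = ∅ ∨ I = A ∪ B := by
  obtain ⟨k₀, hk₀⟩ := hA
  by_cases hk₀I : k₀ ∈ I
  · have hAI : A ⊆ I := fun k hk => by
      by_contra hkI
      have := h k hk
      rw [if_neg hkI, ← h k₀ hk₀, if_pos hk₀I] at this
      exact zero_ne_one this
    have hBI : B ⊆ I := by
      have h₀ := h k₀ hk₀
      rw [if_pos hk₀I, eq_comm, div_eq_one_iff_eq (by rintro h0; simp [h0] at h₀)] at h₀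
      exact inter_eq_right.mp (eq_of_subset_of_card_le inter_subset_right (by exact_mod_cast h₀.ge))
    exact Or.inr (hI.antisymm (union_subset hAI hBI))
  · have hAI : ∀ k ∈ A, k ∉ I := fun k hk hkI => by
      have := h k hk
      rw [if_pos hkI, ← h k₀ hk₀, if_neg hk₀I] at this
      exact one_ne_zero this
    have hBI : I ∩ B = ∅ := by
      have h₀ := h k₀ hk₀
      rw [if_neg hk₀I, eq_comm, div_eq_zero_iff] at h₀
      rcases h₀ with h₀ | h₀ <;> norm_cast at h₀
      · exact card_eq_zero.mp h₀
      · rw [card_eq_zero.mp h₀, inter_empty]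
    refine Or.inl (eq_empty_of_forall_notMem fun i hi => ?_)
    rcases mem_union.mp (hI hi) with hiA | hiB
    · exact hAI i hiA hi
    · exact notMem_empty i (hBI ▸ mem_inter.mpr ⟨hi, hiB⟩)

section Places

variable {G : Type*} {σ : ℕ → G → ℂ} {s t : ℕ}

theorem log_norm_real_place (hreal : ∀ i ∈ Icc 1 s, ∀ u : G, ∃ r : ℝ, 0 < r ∧ σ i u = (r : ℂ))
    {k : ℕ} (hk : k ∈ Icc 1 s) (u : G) : Real.log ‖σ k u‖ = Real.log (σ k u).re := by
  obtain ⟨r, hr, hσ⟩ := hreal k hk u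
  rw [hσ, Complex.norm_real, Real.norm_of_nonneg hr.le, Complex.ofReal_re]

theorem log_norm_complex_place (hreal : ∀ i ∈ Icc 1 s, ∀ u : G, ∃ r : ℝ, 0 < r ∧ σ i u = (r : ℂ))
    (hconj : ∀ j ∈ Icc 1 t, ∀ u : G, σ (s + t + j) u = starRingEnd ℂ (σ (s + j) u))
    (hlck : ∀ u : G, ∀ j ∈ Icc 1 t,
      ‖σ (s + j) u‖ ^ 2 = (∏ k ∈ Icc 1 s, (σ k u).re) ^ (-(1 : ℝ) / (t : ℝ)))
    {i : ℕ} (hi : i ∈ Icc (s + 1) (s + 2 * t)) (u : G) :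
    Real.log ‖σ i u‖ = -(1 / (2 * t)) * ∑ k ∈ Icc 1 s, Real.log (σ k u).re := by
  have hpos : ∀ k ∈ Icc 1 s, 0 < (σ k u).re := fun k hk => by
    obtain ⟨r, hr, hσ⟩ := hreal k hk u
    simpa [hσ] using hr
  have hlog : ∀ j ∈ Icc 1 t, Real.log ‖σ (s + j) u‖
      = -(1 / (2 * t)) * ∑ k ∈ Icc 1 s, Real.log (σ k u).re := fun j hj => by
    rw [Real.log_eq_of_sq_eq_rpow (prod_pos hpos) (hlck u j hj),
      Real.log_prod fun k hk => (hpos k hk).ne']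
    ring
  rcases le_or_gt i (s + t) with hle | hgt
  · rw [← Nat.add_sub_cancel' (show s ≤ i by grind)]
    exact hlog (i - s) (by grind)
  · rw [← show s + t + (i - s - t) = i by grind, hconj _ (by grind), Complex.norm_conj]
    exact hlog _ (by grind)

end Places

theorem stmt5_general (s t : ℕ) (hs : 1 ≤ s)
    (G : Type*) (σ : ℕ → G → ℂ)
    (hreal : ∀ i ∈ Finset.Icc 1 s, ∀ u : G, ∃ r : ℝ, 0 < r ∧ σ i u = (r : ℂ))
    (hconj : ∀ j ∈ Finset.Icc 1 t, ∀ u : G,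
      σ (s + t + j) u = starRingEnd ℂ (σ (s + j) u))
    (hind : LinearIndependent ℝ
      (fun i : Fin s => (fun u : G => Real.log (σ (i.1 + 1) u).re : G → ℝ)))
    (hlck : ∀ u : G, ∀ j ∈ Finset.Icc 1 t,
      ‖σ (s + j) u‖ ^ 2
        = (∏ k ∈ Finset.Icc 1 s, (σ k u).re) ^ (-(1 : ℝ) / (t : ℝ)))
    (I : Finset ℕ) (hI : I ⊆ Finset.Icc 1 (s + 2 * t))
    (htriv : ∀ u : G, ∏ i ∈ I, σ i u = 1) :
    I = ∅ ∨ I = Finset.Icc 1 (s + 2 * t) := by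
  set B := Icc (s + 1) (s + 2 * t)
  have hAB : Disjoint (Icc 1 s) B := disjoint_left.mpr fun k hA hB => by grind
  have hunion : Icc 1 (s + 2 * t) = Icc 1 s ∪ B := by ext; grind
  have hI' : I ⊆ Icc 1 s ∪ B := hunion ▸ hI
  have hcardB : (#B : ℝ) = 2 * t := by
    rw [Nat.card_Icc, show s + 2 * t + 1 - (s + 1) = 2 * t by omega]; push_cast; ring
  have hrel : ∀ u : G, ∑ k ∈ Icc 1 s,
      ((if k ∈ I then 1 else 0) - #(I ∩ B) / #B) * Real.log (σ k u).re = 0 := by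
    intro u
    have h := sum_log_norm_eq_zero_of_prod_eq_one (htriv u)
    rw [sum_eq_sum_ite_add_card_nsmul hAB hI'
      fun i hi => log_norm_complex_place hreal hconj hlck hi u] at h
    rw [sum_congr rfl fun k hk => by rw [log_norm_real_place hreal hk u]] at h
    rw [hcardB]
    simp only [sub_mul, sum_sub_distrib, ite_mul, one_mul, zero_mul, ← mul_sum]
    linear_combination h
  have hcoeff : ∀ k ∈ Icc 1 s, (if k ∈ I then 1 else 0 : ℝ) - #(I ∩ B) / #B = 0 :=
    fun k hk => hind.eq_zero_of_sum_Icc_one_smul_eq_zero (f := fun k u => Real.log (σ k u).re)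
      (funext fun u => by
        simpa only [Finset.sum_apply, Pi.smul_apply, smul_eq_mul, Pi.zero_apply] using hrel u) hk
  rw [hunion]
  exact eq_empty_or_eq_union_of_indicator_eq_card_div ⟨1, by grind⟩ hI'
    fun k hk => sub_eq_zero.mp (hcoeff k hk)

/-- Let `s, t ≥ 1`, `G` a group, and `σ₁, …, σ_{s+2t} : G → ℂ` (indexed here by
`i ∈ {1, …, s+2t}`) be group homomorphisms such that `σ₁, …, σ_s` take positive real
values, `σ_{s+1}, …, σ_{s+t}` take nonzero values, and `σ_{s+t+j} = conj ∘ σ_{s+j}` for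
`1 ≤ j ≤ t`. Assume (i) the functions `u ↦ log σᵢ(u)`, `1 ≤ i ≤ s`, are linearly
independent over `ℝ` in the space of real-valued functions on `G`, and (ii) for all
`u ∈ G` and `1 ≤ j ≤ t`, `|σ_{s+j}(u)|² = (σ₁(u)⋯σ_s(u))^(−1/t)`. Then for any
`I ⊆ {1, …, s+2t}`: if `∏_{i∈I} σᵢ(u) = 1` for all `u ∈ G`, then `I = ∅` or
`I = {1, …, s+2t}`. -/
theorem stmt5 (s t : ℕ) (hs : 1 ≤ s) (ht : 1 ≤ t)
    (G : Type*) [Group G] (σ : ℕ → G → ℂ)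
    (hone : ∀ i ∈ Finset.Icc 1 (s + 2 * t), σ i 1 = 1)
    (hhom : ∀ i ∈ Finset.Icc 1 (s + 2 * t), ∀ u v : G, σ i (u * v) = σ i u * σ i v)
    (hreal : ∀ i ∈ Finset.Icc 1 s, ∀ u : G, ∃ r : ℝ, 0 < r ∧ σ i u = (r : ℂ))
    (hnz : ∀ j ∈ Finset.Icc 1 t, ∀ u : G, σ (s + j) u ≠ 0)
    (hconj : ∀ j ∈ Finset.Icc 1 t, ∀ u : G,
      σ (s + t + j) u = starRingEnd ℂ (σ (s + j) u))
    (hind : LinearIndependent ℝ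
      (fun i : Fin s => (fun u : G => Real.log (σ (i.1 + 1) u).re : G → ℝ)))
    (hlck : ∀ u : G, ∀ j ∈ Finset.Icc 1 t,
      ‖σ (s + j) u‖ ^ 2
        = (∏ k ∈ Finset.Icc 1 s, (σ k u).re) ^ (-(1 : ℝ) / (t : ℝ)))
    (I : Finset ℕ) (hI : I ⊆ Finset.Icc 1 (s + 2 * t))
    (htriv : ∀ u : G, ∏ i ∈ I, σ i u = 1) :
    I = ∅ ∨ I = Finset.Icc 1 (s + 2 * t) :=
  stmt5_general s t hs G σ hreal hconj hind hlck I hI htriv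
end

section
/- Let s, t ≥ 1 be integers, G a group, σ_1, …, σ_s : G → ℝ_{>0} group homomorphisms into the positive reals, and σ_{s+1}, …, σ_{s+t} : G → ℂ∖{0} group homomorphisms into the nonzero complex numbers; define σ_{s+t+j}(u) = conj(σ_{s+j}(u)) for 1 ≤ j ≤ t. Assume: (i) the functions u ↦ log σ_1(u), …, u ↦ log σ_s(u) are linearly independent over ℝ in the vector space of real-valued functions on G; (ii) for all u ∈ G and all 1 ≤ j ≤ t one has |σ_{s+j}(u)|^2 = (σ_1(u)·…·σ_s(u))^{−1/t}; (iii) the s+2t homomorphisms σ_1, …, σ_{s+2t} are pairwise distinct as functions on G. Then for a subset I ⊆ {1, …, s+2t}, one has (σ_1(u)·…·σ_s(u))^{1/t}·∏_{i∈I} σ_i(u) = 1 for all u ∈ G if and only if I = {s+j, s+t+j} for some 1 ≤ j ≤ t. -/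
/-!
Write `P = σ₁⋯σ_s`. Taking `log ‖·‖` of `P^{1/t} ∏_{i ∈ I} σᵢ = 1` and using that every complex
`σᵢ` has `2 log ‖σᵢ‖ = -(log P)/t` gives the linear relation
`∑_{k ≤ s} ((2 - m)/t + 2·[k ∈ I]) log σ_k = 0`, where `m` is the number of complex indices in
`I`. By linear independence every coefficient vanishes, and as `m ≤ 2t` this forces `I` to
contain no real index and `m = 2`. For `I = {a, b}` the identity then reads
`σ_a σ_b = P^{-1/t} = σ_b · conj σ_b`, so `σ_a = conj σ_b`, which is also the conjugate partner
of `σ_b`; distinctness of the embeddings makes `a` that partner.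
-/

open Finset ComplexConjugate

lemma sum_Icc_one_eq_sum_fin {M : Type*} [AddCommMonoid M] (s : ℕ) (f : ℕ → M) :
    ∑ k ∈ Icc 1 s, f k = ∑ i : Fin s, f (i + 1) := by
  rw [Fin.sum_univ_eq_sum_range (fun i => f (i + 1)), range_eq_Ico, sum_Ico_add',
    zero_add, Ico_add_one_right_eq_Icc]

lemma LinearIndependent.eq_zero_of_sum_Icc_eq_zero {R M : Type*} [Ring R] [AddCommGroup M]
    [Module R M] {s : ℕ} {f : ℕ → M} (hf : LinearIndependent R fun i : Fin s => f (i + 1))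
    {c : ℕ → R} (hc : ∑ k ∈ Icc 1 s, c k • f k = 0) : ∀ k ∈ Icc 1 s, c k = 0 := by
  intro k hk
  rw [sum_Icc_one_eq_sum_fin] at hc
  have hk' : k - 1 < s := by grind
  simpa [Nat.sub_add_cancel (mem_Icc.mp hk).1] using
    Fintype.linearIndependent_iff.mp hf (fun i => c (i + 1)) hc ⟨k - 1, hk'⟩

lemma Complex.eq_conj_of_ofReal_mul_mul_eq_one {x : ℝ} {z w : ℂ}
    (h : (x : ℂ) * (z * w) = 1) (hw : x * ‖w‖ ^ 2 = 1) : z = conj w := by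
  have hx : (x : ℂ) ≠ 0 := left_ne_zero_of_mul_eq_one h
  have hw0 : w ≠ 0 := by rintro rfl; simp at hw
  apply mul_right_cancel₀ hw0
  apply mul_left_cancel₀ hx
  rw [h, Complex.conj_mul', ← Complex.ofReal_pow, ← Complex.ofReal_mul, hw, Complex.ofReal_one]

lemma exists_eq_or_eq_of_mem_Icc {s t b : ℕ} (hb : b ∈ Icc (s + 1) (s + 2 * t)) :
    ∃ j ∈ Icc 1 t, b = s + j ∨ b = s + t + j := by
  simp only [mem_Icc] at hb ⊢
  by_cases h : b ≤ s + t
  · exact ⟨b - s, by omega, Or.inl (by omega)⟩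
  · exact ⟨b - s - t, by omega, Or.inr (by omega)⟩

lemma sdiff_Icc_subset_Icc {I : Finset ℕ} {s n : ℕ} (hI : I ⊆ Icc 1 (s + n)) :
    I \ Icc 1 s ⊆ Icc (s + 1) (s + n) := by
  intro b hb
  have := hI (mem_sdiff.mp hb).1
  grind

lemma not_and_eq_two_of_div_add_ite_eq_zero {m t : ℕ} {p : Prop} [Decidable p] (ht : 1 ≤ t)
    (hm : m ≤ 2 * t) (h : ((2 : ℝ) - m) / t + (if p then 2 else 0) = 0) : ¬p ∧ m = 2 := by
  have ht' : (t : ℝ) ≠ 0 := by positivity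
  rw [div_add' _ _ _ ht', div_eq_zero_iff, or_iff_left ht'] at h
  split_ifs at h with hp
  · have : (m : ℝ) = 2 + 2 * t := by linarith
    norm_cast at this
    omega
  · exact ⟨hp, by exact_mod_cast (by linarith : (m : ℝ) = 2)⟩

section
variable {G : Type*} {s t : ℕ} {σ : ℕ → G → ℂ}

def realProd (s : ℕ) (σ : ℕ → G → ℂ) (u : G) : ℝ := ∏ k ∈ Icc 1 s, (σ k u).re

structure IsLCKEmbeddingFamily (s t : ℕ) (σ : ℕ → G → ℂ) : Prop where
  real : ∀ i ∈ Icc 1 s, ∀ u : G, ∃ r : ℝ, 0 < r ∧ σ i u = (r : ℂ)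
  conj_eq : ∀ j ∈ Icc 1 t, ∀ u : G, σ (s + t + j) u = conj (σ (s + j) u)
  norm_sq : ∀ u : G, ∀ j ∈ Icc 1 t, ‖σ (s + j) u‖ ^ 2 = realProd s σ u ^ (-(1 : ℝ) / t)

namespace IsLCKEmbeddingFamily

lemma re_pos_and_norm_eq_re (hσ : IsLCKEmbeddingFamily s t σ) {k : ℕ} (hk : k ∈ Icc 1 s)
    (u : G) : 0 < (σ k u).re ∧ ‖σ k u‖ = (σ k u).re := by
  obtain ⟨r, hr, hru⟩ := hσ.real k hk u
  simp [hru, hr, abs_of_pos hr]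

lemma realProd_pos (hσ : IsLCKEmbeddingFamily s t σ) (u : G) : 0 < realProd s σ u :=
  prod_pos fun _ hk => (hσ.re_pos_and_norm_eq_re hk u).1

lemma norm_sq_eq_realProd_rpow (hσ : IsLCKEmbeddingFamily s t σ) {b : ℕ}
    (hb : b ∈ Icc (s + 1) (s + 2 * t)) (u : G) :
    ‖σ b u‖ ^ 2 = realProd s σ u ^ (-(1 : ℝ) / t) := by
  obtain ⟨j, hj, rfl | rfl⟩ := exists_eq_or_eq_of_mem_Icc hb
  · exact hσ.norm_sq u j hj
  · rw [hσ.conj_eq j hj u, Complex.norm_conj]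
    exact hσ.norm_sq u j hj

lemma realProd_rpow_mul_norm_sq (hσ : IsLCKEmbeddingFamily s t σ) {b : ℕ}
    (hb : b ∈ Icc (s + 1) (s + 2 * t)) (u : G) :
    realProd s σ u ^ ((1 : ℝ) / t) * ‖σ b u‖ ^ 2 = 1 := by
  have hP := hσ.realProd_pos u
  rw [hσ.norm_sq_eq_realProd_rpow hb, neg_div, Real.rpow_neg hP.le,
    mul_inv_cancel₀ (Real.rpow_pos_of_pos hP _).ne']

lemma two_mul_log_norm (hσ : IsLCKEmbeddingFamily s t σ) {b : ℕ}
    (hb : b ∈ Icc (s + 1) (s + 2 * t)) (u : G) :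
    2 * Real.log ‖σ b u‖ = -Real.log (realProd s σ u) / t := by
  have h := congrArg Real.log (hσ.norm_sq_eq_realProd_rpow hb u)
  rw [Real.log_pow, Real.log_rpow (hσ.realProd_pos u), Nat.cast_ofNat] at h
  rw [h]
  ring

lemma norm_pos (hσ : IsLCKEmbeddingFamily s t σ) {i : ℕ} (hi : i ∈ Icc 1 (s + 2 * t))
    (u : G) : 0 < ‖σ i u‖ := by
  by_cases his : i ≤ s
  · have hk : i ∈ Icc 1 s := by grind
    rw [(hσ.re_pos_and_norm_eq_re hk u).2]
    exact (hσ.re_pos_and_norm_eq_re hk u).1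
  · have hb : i ∈ Icc (s + 1) (s + 2 * t) := by grind
    have h := hσ.norm_sq_eq_realProd_rpow hb u ▸ Real.rpow_pos_of_pos (hσ.realProd_pos u) _
    exact (norm_nonneg _).lt_of_ne (sq_pos_iff.mp h).symm

lemma exists_conj_partner (hσ : IsLCKEmbeddingFamily s t σ) {b : ℕ}
    (hb : b ∈ Icc (s + 1) (s + 2 * t)) :
    ∃ j ∈ Icc 1 t, ∃ b' ∈ Icc 1 (s + 2 * t), ({b', b} : Finset ℕ) = {s + j, s + t + j} ∧
      ∀ u, σ b' u = conj (σ b u) := by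
  obtain ⟨j, hj, rfl | rfl⟩ := exists_eq_or_eq_of_mem_Icc hb
  · exact ⟨j, hj, s + t + j, by grind, pair_comm _ _, hσ.conj_eq j hj⟩
  · exact ⟨j, hj, s + j, by grind, rfl, fun u => by rw [hσ.conj_eq j hj u, Complex.conj_conj]⟩

lemma sum_coeff_mul_log_re_eq_zero (hσ : IsLCKEmbeddingFamily s t σ) {I : Finset ℕ}
    (hI : I ⊆ Icc 1 (s + 2 * t)) {u : G}
    (h : ((realProd s σ u ^ ((1 : ℝ) / t) : ℝ) : ℂ) * ∏ i ∈ I, σ i u = 1) :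
    ∑ k ∈ Icc 1 s, (((2 : ℝ) - #(I \ Icc 1 s)) / t + if k ∈ I then 2 else 0) *
      Real.log (σ k u).re = 0 := by
  have hP := hσ.realProd_pos u
  have hnorm_ne : ∀ i ∈ I, ‖σ i u‖ ≠ 0 := fun i hi => (hσ.norm_pos (hI hi) u).ne'
  have hnorm : realProd s σ u ^ ((1 : ℝ) / t) * ∏ i ∈ I, ‖σ i u‖ = 1 := by
    simpa [norm_prod, abs_of_pos (Real.rpow_pos_of_pos hP _)] using congrArg norm h
  have hlog : Real.log (realProd s σ u) / t + ∑ i ∈ I, Real.log ‖σ i u‖ = 0 := by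
    have := congrArg Real.log hnorm
    rwa [Real.log_mul (Real.rpow_pos_of_pos hP _).ne' (prod_ne_zero_iff.mpr hnorm_ne),
      Real.log_rpow hP, Real.log_prod hnorm_ne, Real.log_one, one_div_mul_eq_div] at this
  have hsplit : 2 * ∑ i ∈ I, Real.log ‖σ i u‖ =
      2 * ∑ k ∈ I ∩ Icc 1 s, Real.log (σ k u).re
        - #(I \ Icc 1 s) * Real.log (realProd s σ u) / t := by
    have hreal_part : ∀ k ∈ I ∩ Icc 1 s, Real.log ‖σ k u‖ = Real.log (σ k u).re :=
      fun k hk => by rw [(hσ.re_pos_and_norm_eq_re (mem_inter.mp hk).2 u).2]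
    have hcomplex_part : ∀ b ∈ I \ Icc 1 s,
        2 * Real.log ‖σ b u‖ = -Real.log (realProd s σ u) / t := fun b hb =>
      hσ.two_mul_log_norm (sdiff_Icc_subset_Icc hI hb) u
    rw [← sum_inter_add_sum_sdiff I (Icc 1 s), mul_add, mul_sum (I \ Icc 1 s),
      sum_congr rfl hreal_part, sum_congr rfl hcomplex_part, sum_const, nsmul_eq_mul]
    ring
  have hL : Real.log (realProd s σ u) = ∑ k ∈ Icc 1 s, Real.log (σ k u).re :=
    Real.log_prod fun _ hk => (hσ.re_pos_and_norm_eq_re hk u).1.ne'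
  simp only [add_mul, sum_add_distrib, ite_mul, zero_mul, sum_ite_mem, ← mul_sum]
  rw [inter_comm, ← hL]
  linear_combination 2 * hlog - hsplit

lemma subset_Icc_and_card_eq_two (hσ : IsLCKEmbeddingFamily s t σ) (hs : 1 ≤ s) (ht : 1 ≤ t)
    (hind : LinearIndependent ℝ fun i : Fin s => fun u : G => Real.log (σ (i.1 + 1) u).re)
    {I : Finset ℕ} (hI : I ⊆ Icc 1 (s + 2 * t))
    (h : ∀ u, ((realProd s σ u ^ ((1 : ℝ) / t) : ℝ) : ℂ) * ∏ i ∈ I, σ i u = 1) :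
    I ⊆ Icc (s + 1) (s + 2 * t) ∧ #I = 2 := by
  have hcoef := hind.eq_zero_of_sum_Icc_eq_zero (f := fun k u => Real.log (σ k u).re)
    (c := fun k => ((2 : ℝ) - #(I \ Icc 1 s)) / t + if k ∈ I then 2 else 0) <| by
      funext u
      simpa [Finset.sum_apply] using hσ.sum_coeff_mul_log_re_eq_zero hI (h u)
  have hcard : #(I \ Icc 1 s) ≤ 2 * t :=
    (card_le_card (sdiff_Icc_subset_Icc hI)).trans (by simp)
  have hkey : ∀ k ∈ Icc 1 s, k ∉ I ∧ #(I \ Icc 1 s) = 2 := fun k hk =>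
    not_and_eq_two_of_div_add_ite_eq_zero ht hcard (hcoef k hk)
  have hIsdiff : I \ Icc 1 s = I :=
    sdiff_eq_self_of_disjoint (disjoint_left.mpr fun k hkI hk => (hkey k hk).1 hkI)
  rw [← hIsdiff]
  exact ⟨sdiff_Icc_subset_Icc hI, (hkey 1 (by simpa using hs)).2⟩

lemma eq_pair_of_subset_Icc_of_card_eq_two (hσ : IsLCKEmbeddingFamily s t σ)
    (hdist : ∀ i ∈ Icc 1 (s + 2 * t), ∀ j ∈ Icc 1 (s + 2 * t), i ≠ j → σ i ≠ σ j)
    {I : Finset ℕ} (hI : I ⊆ Icc (s + 1) (s + 2 * t)) (hcard : #I = 2)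
    (h : ∀ u, ((realProd s σ u ^ ((1 : ℝ) / t) : ℝ) : ℂ) * ∏ i ∈ I, σ i u = 1) :
    ∃ j ∈ Icc 1 t, I = {s + j, s + t + j} := by
  obtain ⟨a, b, hab, rfl⟩ := card_eq_two.mp hcard
  have ha : a ∈ Icc (s + 1) (s + 2 * t) := hI (by simp)
  have hb : b ∈ Icc (s + 1) (s + 2 * t) := hI (by simp)
  have hab_conj : ∀ u, σ a u = conj (σ b u) := fun u =>
    Complex.eq_conj_of_ofReal_mul_mul_eq_one (by simpa [prod_pair hab] using h u)
      (hσ.realProd_rpow_mul_norm_sq hb u)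
  obtain ⟨j, hj, b', hb', hpair, hb'_conj⟩ := hσ.exists_conj_partner hb
  have hab' : a = b' := by
    by_contra hne
    exact hdist a (by grind) b' hb' hne (funext fun u => (hab_conj u).trans (hb'_conj u).symm)
  exact ⟨j, hj, hab' ▸ hpair⟩

lemma realProd_rpow_mul_prod_pair_eq_one (hσ : IsLCKEmbeddingFamily s t σ) {j : ℕ}
    (hj : j ∈ Icc 1 t) (u : G) :
    ((realProd s σ u ^ ((1 : ℝ) / t) : ℝ) : ℂ) * ∏ i ∈ {s + j, s + t + j}, σ i u = 1 := by
  have hne : s + j ≠ s + t + j := by grind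
  rw [prod_pair hne, hσ.conj_eq j hj u, Complex.mul_conj']
  exact_mod_cast hσ.realProd_rpow_mul_norm_sq (b := s + j) (by grind) u

end IsLCKEmbeddingFamily

end

theorem stmt6_general (s t : ℕ) (hs : 1 ≤ s) (ht : 1 ≤ t)
    (G : Type*) (σ : ℕ → G → ℂ)
    (hreal : ∀ i ∈ Finset.Icc 1 s, ∀ u : G, ∃ r : ℝ, 0 < r ∧ σ i u = (r : ℂ))
    (hconj : ∀ j ∈ Finset.Icc 1 t, ∀ u : G,
      σ (s + t + j) u = starRingEnd ℂ (σ (s + j) u))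
    (hind : LinearIndependent ℝ
      (fun i : Fin s => (fun u : G => Real.log (σ (i.1 + 1) u).re : G → ℝ)))
    (hlck : ∀ u : G, ∀ j ∈ Finset.Icc 1 t,
      ‖σ (s + j) u‖ ^ 2
        = (∏ k ∈ Finset.Icc 1 s, (σ k u).re) ^ (-(1 : ℝ) / (t : ℝ)))
    (hdist : ∀ i ∈ Finset.Icc 1 (s + 2 * t), ∀ j ∈ Finset.Icc 1 (s + 2 * t),
      i ≠ j → σ i ≠ σ j)
    (I : Finset ℕ) (hI : I ⊆ Finset.Icc 1 (s + 2 * t)) :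
    (∀ u : G, ((((∏ k ∈ Finset.Icc 1 s, (σ k u).re) ^ ((1 : ℝ) / (t : ℝ)) : ℝ) : ℂ)
        * ∏ i ∈ I, σ i u = 1))
      ↔ ∃ j ∈ Finset.Icc 1 t, I = {s + j, s + t + j} := by
  have hσ : IsLCKEmbeddingFamily s t σ := ⟨hreal, hconj, hlck⟩
  constructor
  · intro h
    obtain ⟨hI', hcard⟩ := hσ.subset_Icc_and_card_eq_two hs ht hind hI h
    exact hσ.eq_pair_of_subset_Icc_of_card_eq_two hdist hI' hcard h
  · rintro ⟨j, hj, rfl⟩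
    exact hσ.realProd_rpow_mul_prod_pair_eq_one hj

/-- Let `s, t ≥ 1`, `G` a group, and `σ₁, …, σ_{s+2t} : G → ℂ` (indexed here by
`i ∈ {1, …, s+2t}`) be group homomorphisms such that `σ₁, …, σ_s` take positive real
values, `σ_{s+1}, …, σ_{s+t}` take nonzero values, and `σ_{s+t+j} = conj ∘ σ_{s+j}` for
`1 ≤ j ≤ t`. Assume (i) the functions `u ↦ log σᵢ(u)`, `1 ≤ i ≤ s`, are linearly
independent over `ℝ`, (ii) for all `u ∈ G` and `1 ≤ j ≤ t`,
`|σ_{s+j}(u)|² = (σ₁(u)⋯σ_s(u))^(−1/t)`, and (iii) the `s+2t` homomorphisms are pairwise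
distinct as functions on `G`. Then for `I ⊆ {1, …, s+2t}`, one has
`(σ₁(u)⋯σ_s(u))^(1/t)·∏_{i∈I} σᵢ(u) = 1` for all `u ∈ G` if and only if
`I = {s+j, s+t+j}` for some `1 ≤ j ≤ t`. -/
theorem stmt6 (s t : ℕ) (hs : 1 ≤ s) (ht : 1 ≤ t)
    (G : Type*) [Group G] (σ : ℕ → G → ℂ)
    (hone : ∀ i ∈ Finset.Icc 1 (s + 2 * t), σ i 1 = 1)
    (hhom : ∀ i ∈ Finset.Icc 1 (s + 2 * t), ∀ u v : G, σ i (u * v) = σ i u * σ i v)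
    (hreal : ∀ i ∈ Finset.Icc 1 s, ∀ u : G, ∃ r : ℝ, 0 < r ∧ σ i u = (r : ℂ))
    (hnz : ∀ j ∈ Finset.Icc 1 t, ∀ u : G, σ (s + j) u ≠ 0)
    (hconj : ∀ j ∈ Finset.Icc 1 t, ∀ u : G,
      σ (s + t + j) u = starRingEnd ℂ (σ (s + j) u))
    (hind : LinearIndependent ℝ
      (fun i : Fin s => (fun u : G => Real.log (σ (i.1 + 1) u).re : G → ℝ)))
    (hlck : ∀ u : G, ∀ j ∈ Finset.Icc 1 t,
      ‖σ (s + j) u‖ ^ 2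
        = (∏ k ∈ Finset.Icc 1 s, (σ k u).re) ^ (-(1 : ℝ) / (t : ℝ)))
    (hdist : ∀ i ∈ Finset.Icc 1 (s + 2 * t), ∀ j ∈ Finset.Icc 1 (s + 2 * t),
      i ≠ j → σ i ≠ σ j)
    (I : Finset ℕ) (hI : I ⊆ Finset.Icc 1 (s + 2 * t)) :
    (∀ u : G, ((((∏ k ∈ Finset.Icc 1 s, (σ k u).re) ^ ((1 : ℝ) / (t : ℝ)) : ℝ) : ℂ)
        * ∏ i ∈ I, σ i u = 1))
      ↔ ∃ j ∈ Finset.Icc 1 t, I = {s + j, s + t + j} :=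
  stmt6_general s t hs ht G σ hreal hconj hind hlck hdist I hI
end

section
/- Let a ∈ ℂ with a ∉ 2πi·ℤ. Then for every smooth 1-periodic function g : ℝ → ℂ there exists a smooth 1-periodic function f : ℝ → ℂ such that f′(x) − a·f(x) = g(x) for all x ∈ ℝ. -/
set_option maxHeartbeats 1000000

open scoped ENNReal NNReal

/-- Let `a ∈ ℂ` with `a ∉ 2πi·ℤ`. Then for every smooth `1`-periodic `g : ℝ → ℂ` there is
a smooth `1`-periodic `f : ℝ → ℂ` with `f′(x) − a·f(x) = g(x)` for all `x`. -/
theorem stmt8 (a : ℂ) (ha : ∀ k : ℤ, a ≠ 2 * Real.pi * Complex.I * k)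
    (g : ℝ → ℂ) (hg : ContDiff ℝ (⊤ : ℕ∞) g) (hgper : ∀ x : ℝ, g (x + 1) = g x) :
    ∃ f : ℝ → ℂ, ContDiff ℝ (⊤ : ℕ∞) f ∧ (∀ x : ℝ, f (x + 1) = f x) ∧
      ∀ x : ℝ, deriv f x - a * f x = g x := by
  -- exp a ≠ 1
  have hexp : Complex.exp a ≠ 1 := by
    intro h1
    rw [Complex.exp_eq_one_iff] at h1
    obtain ⟨n, hn⟩ := h1
    exact ha n (by rw [hn]; push_cast; ring)
  have hcg : Continuous g := hg.continuous
  -- analyticity of g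
  -- the integrand
  set h : ℝ → ℂ := fun t => Complex.exp (-a * t) * g t with hh
  have hexpa : ∀ (b : ℂ) (x : ℝ), AnalyticAt ℝ (fun t : ℝ => Complex.exp (b * t)) x := by
    intro b x
    have h1 : AnalyticAt ℝ (fun t : ℝ => b * (t:ℂ)) x :=
      analyticAt_const.mul (Complex.ofRealCLM.analyticAt x)
    exact (analyticAt_cexp.restrictScalars).comp h1
  have hch : Continuous h :=
    (Complex.continuous_exp.comp (continuous_const.mul Complex.continuous_ofReal)).mul hcg
  set F : ℝ → ℂ := fun x => ∫ t in (0:ℝ)..x, h t with hF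
  have hF' : ∀ x : ℝ, HasDerivAt F (h x) x := by
    intro x
    exact intervalIntegral.integral_hasDerivAt_right (hch.intervalIntegrable _ _)
      (hch.stronglyMeasurableAtFilter _ _) hch.continuousAt
  have hEs : ∀ b : ℂ, ContDiff ℝ (⊤ : ℕ∞) (fun t : ℝ => Complex.exp (b * t)) := fun b =>
    (contDiff_const.mul Complex.ofRealCLM.contDiff).cexp
  have hhs : ContDiff ℝ (⊤ : ℕ∞) h := (hEs (-a)).mul hg
  have hFs : ContDiff ℝ (⊤ : ℕ∞) F := by
    rw [contDiff_infty_iff_deriv]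
    refine ⟨fun x => (hF' x).differentiableAt, ?_⟩
    have : deriv F = h := funext fun x => (hF' x).deriv
    rw [this]
    exact hhs
  set C : ℂ := Complex.exp a * F 1 / (1 - Complex.exp a) with hC
  set f : ℝ → ℂ := fun x => Complex.exp (a * x) * (C + F x) with hf
  -- analyticity / smoothness of f
  have hfsmooth : ContDiff ℝ (⊤ : ℕ∞) f := (hEs a).mul (contDiff_const.add hFs)
  -- derivative of the exponential factor
  have hE : ∀ (b : ℂ) (x : ℝ),
      HasDerivAt (fun x : ℝ => Complex.exp (b * x)) (Complex.exp (b * x) * b) x := by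
    intro b x
    have : HasDerivAt (fun x : ℝ => b * (x : ℂ)) b x := by
      simpa using ((hasDerivAt_id x).ofReal_comp.const_mul b)
    exact this.cexp
  have hfd : ∀ x : ℝ, HasDerivAt f (a * f x + g x) x := by
    intro x
    have hd := (hE a x).mul ((hasDerivAt_const x C).add (hF' x))
    have hinv : Complex.exp (a * x) * Complex.exp (-a * x) = 1 := by
      rw [← Complex.exp_add]
      norm_num
    convert hd using 1
    · rfl
    · rfl
    simp only [hf, hh, Pi.add_apply]
    linear_combination (-(g x)) * hinv
  -- periodicity via constant function
  have hper : ∀ x : ℝ, f (x + 1) = f x := by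
    set ψ : ℝ → ℂ := fun x => Complex.exp (-a * x) * (f (x + 1) - f x) with hψ
    have hψd : ∀ x : ℝ, HasDerivAt ψ 0 x := by
      intro x
      have h1 : HasDerivAt (fun y : ℝ => f (y + 1)) (a * f (x+1) + g (x+1)) x :=
        HasDerivAt.comp_add_const x 1 (hfd (x+1))
      have hd := (hE (-a) x).mul (h1.sub (hfd x))
      convert hd using 1
      · rfl
      · rfl
      rw [hgper, Pi.sub_apply]
      ring
    have hcst : ∀ x : ℝ, ψ x = ψ 0 := fun x =>
      is_const_of_deriv_eq_zero (fun y => (hψd y).differentiableAt)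
        (fun y => (hψd y).deriv) x 0
    have hF0 : F 0 = 0 := intervalIntegral.integral_same
    have hψ0 : ψ 0 = 0 := by
      simp only [hψ, hf]
      have h10 : (0:ℝ) + 1 = 1 := by norm_num
      rw [h10]
      push_cast
      rw [mul_zero, mul_one, Complex.exp_zero, hF0]
      have hne : (1 : ℂ) - Complex.exp a ≠ 0 := sub_ne_zero.mpr (Ne.symm hexp)
      simp only [hC]
      field_simp
      rw [mul_zero, Complex.exp_zero]
      ring
    intro x
    have hx := hcst x
    rw [hψ0] at hx
    rcases mul_eq_zero.mp hx with h0 | h0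
    · exact absurd h0 (Complex.exp_ne_zero _)
    · exact sub_eq_zero.mp h0
  exact ⟨f, hfsmooth, hper, fun x => by rw [(hfd x).deriv]; ring⟩
end

section
/- Let s ≥ 1, let G = ℤ^s be the free abelian group of rank s, and let χ : G → ℂ^× be a group homomorphism, defining a one-dimensional complex representation ℂ_χ of G (where m ∈ G acts on ℂ by multiplication by χ(m)). Then the group cohomology H^n(G, ℂ_χ) vanishes for every n ≥ 0 if and only if χ is not the trivial homomorphism. -/
/-!
For a central element `t`, inserting `t` into the arguments of a cochain,
`(K φ)(g₁, …, gₙ) = ∑ᵢ (-1)ⁱ φ(g₁, …, gᵢ, t, gᵢ₊₁, …, gₙ)`, is a homotopy between the action of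
`t` on cochains and the identity: `K d + d K = ρ(t) - 1`. For `ℂ_χ` with `χ(t) ≠ 1`, `ρ(t) - 1` is
multiplication by the unit `χ(t) - 1`, so the identity of the cochain complex is null-homotopic
and all cohomology vanishes; since `ℤ^s` is abelian, such a `t` exists as soon as `χ ≠ 1`.
For `χ = 1`, on the other hand, `H⁰(G, ℂ) = ℂ`.
-/

universe u

/-- The one-dimensional complex representation of a group `G` associated to a character
`χ : G → ℂˣ`, where `g ∈ G` acts on `ℂ` by multiplication by `χ(g)`. -/
noncomputable def oneDimRep (G : Type) [Group G] (χ : G →* ℂˣ) : Representation ℂ G ℂ where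
  toFun g := (χ g : ℂ) • LinearMap.id
  map_one' := by
    simp only [map_one, Units.val_one, one_smul]
    rfl
  map_mul' g h := by
    refine LinearMap.ext fun x => ?_
    simp only [map_mul, Units.val_mul, LinearMap.smul_apply, Module.End.mul_apply,
      LinearMap.id_apply, smul_eq_mul]
    ring

namespace Fin

variable {α : Type*} {n : ℕ}

theorem insertNth_apply_eq_dite (i : Fin (n + 1)) (x : α) (p : Fin n → α) (k : Fin (n + 1)) :
    insertNth (α := fun _ => α) i x p k =
      if h : (k : ℕ) < i then p ⟨k, by omega⟩
      else if h' : (k : ℕ) = i then x else p ⟨k - 1, by omega⟩ := by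
  rcases lt_trichotomy k i with h | rfl | h
  · rw [insertNth_apply_below h, eq_rec_constant, dif_pos (show (k : ℕ) < i from h)]
    rfl
  · simp
  · rw [insertNth_apply_above h, eq_rec_constant, dif_neg (not_lt.mpr (show (i : ℕ) ≤ k from h.le)),
      dif_neg (val_ne_of_ne h.ne')]
    rfl

variable (op : α → α → α) (t : α)

theorem contractNth_castSucc_insertNth_succ_of_lt {i j : Fin (n + 1)} (h : j < i)
    (g : Fin (n + 1) → α) :
    contractNth j.castSucc op (insertNth i.succ t g) = insertNth i t (contractNth j op g) := by
  rw [lt_def] at h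
  funext k
  simp only [contractNth, insertNth_apply_eq_dite, val_castSucc, val_succ]
  split_ifs <;> first | omega | (congr! <;> simp -failIfUnchanged only [val_succ] <;> omega)

theorem contractNth_succ_insertNth_castSucc_of_le {i j : Fin (n + 1)} (h : i ≤ j)
    (g : Fin (n + 1) → α) :
    contractNth j.succ op (insertNth i.castSucc t g) = insertNth i t (contractNth j op g) := by
  rw [le_def] at h
  funext k
  simp only [contractNth, insertNth_apply_eq_dite, val_castSucc, val_succ]
  split_ifs <;> first | omega | (congr! <;> simp -failIfUnchanged only [val_succ] <;> omega)

theorem contractNth_castSucc_insertNth_succ (j : Fin (n + 1)) (g : Fin (n + 1) → α)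
    (h : op (g j) t = op t (g j)) :
    contractNth j.castSucc op (insertNth j.succ t g) =
      contractNth j.castSucc op (insertNth j.castSucc t g) := by
  funext k
  simp only [contractNth, insertNth_apply_eq_dite, val_castSucc, val_succ]
  split_ifs <;>
    first | omega | (congr! <;> omega) | (obtain rfl : k = j := Fin.ext (by assumption); simpa using h)

theorem contractNth_last_insertNth_last (g : Fin (n + 1) → α) :
    contractNth (last (n + 1)) op (insertNth (last (n + 1)) t g) = g := by
  funext k
  simp only [contractNth, insertNth_apply_eq_dite, val_castSucc, val_last]
  split_ifs <;> first | omega | congr!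

end Fin

open Fin in
theorem sum_contractNth_insertNth_add_sum_insertNth_contractNth {G R M : Type*} [Monoid G] [Ring R]
    [AddCommGroup M] [Module R M] {n : ℕ} (t : G) (g : Fin (n + 1) → G)
    (ht : ∀ i, g i * t = t * g i) (φ : (Fin (n + 1) → G) → M) :
    ∑ i : Fin (n + 2), ∑ j : Fin (n + 2),
        (-1 : R) ^ (i + j : ℕ) • φ (contractNth j (· * ·) (insertNth i t g)) +
      ∑ j : Fin (n + 1), ∑ i : Fin (n + 1),
        (-1 : R) ^ (j + i : ℕ) • φ (insertNth i t (contractNth j (· * ·) g)) = φ g := by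
  set a : Fin (n + 2) × Fin (n + 2) → M := fun p =>
    (-1 : R) ^ (p.1 + p.2 : ℕ) • φ (contractNth p.2 (· * ·) (insertNth p.1 t g))
  set b : Fin (n + 1) × Fin (n + 1) → M := fun q =>
    (-1 : R) ^ (q.1 + q.2 : ℕ) • φ (insertNth q.2 t (contractNth q.1 (· * ·) g))
  -- A pair `(i, j)` of the first sum is either matched, via `e`, with a term of the second sum
  -- (when `j + 1 < i` or `i < j`), or lies on the diagonal, or just below it.
  let e : (Fin (n + 1) × Fin (n + 1)) ⊕ Fin (n + 2) ⊕ Fin (n + 1) → Fin (n + 2) × Fin (n + 2) :=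
    Sum.elim (fun q => if q.1 < q.2 then (q.2.succ, q.1.castSucc) else (q.2.castSucc, q.1.succ))
      (Sum.elim (fun i => (i, i)) (fun j => (j.succ, j.castSucc)))
  have he : e.Bijective := by
    rw [Fintype.bijective_iff_injective_and_card]
    refine ⟨?_, by simp only [Fintype.card_sum, Fintype.card_prod, Fintype.card_fin]; ring⟩
    rintro (⟨i, j⟩ | i | j) (⟨i', j'⟩ | i' | j') h <;>
      simp only [e, Sum.elim_inl, Sum.elim_inr] at h <;> (try split_ifs at h) <;>
      simp [Prod.ext_iff, Fin.ext_iff] at h ⊢ <;> omega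
  have hoff : ∀ q, a (e (.inl q)) = -b q := by
    rintro ⟨j, i⟩
    simp only [e, a, b, Sum.elim_inl]
    split_ifs with h
    · rw [contractNth_castSucc_insertNth_succ_of_lt _ _ h]
      simp only [val_succ, val_castSucc]
      rw [Nat.add_right_comm (i : ℕ), Nat.add_comm (i : ℕ), pow_succ, mul_neg_one, neg_smul]
    · rw [contractNth_succ_insertNth_castSucc_of_le _ _ (not_lt.mp h)]
      simp only [val_succ, val_castSucc]
      rw [← add_assoc, Nat.add_comm (i : ℕ), pow_succ, mul_neg_one, neg_smul]
  have hdiag : ∑ i, a (e (.inr (.inl i))) + ∑ j, a (e (.inr (.inr j))) = φ g := by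
    have hpair : ∀ j : Fin (n + 1), a (j.castSucc, j.castSucc) + a (j.succ, j.castSucc) = 0 := by
      intro j
      simp only [a, val_succ, val_castSucc, contractNth_castSucc_insertNth_succ _ _ _ _ (ht j)]
      rw [Nat.add_right_comm (j : ℕ), pow_succ, mul_neg_one, neg_smul, add_neg_cancel]
    have hlast : a (last (n + 1), last (n + 1)) = φ g := by
      simp only [a, contractNth_last_insertNth_last, val_last, Even.neg_one_pow ⟨n + 1, rfl⟩,
        one_smul]
    simp only [e, Sum.elim_inr, Sum.elim_inl]
    rw [Fin.sum_univ_castSucc, add_right_comm, ← Finset.sum_add_distrib,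
      Fintype.sum_eq_zero _ hpair, zero_add, hlast]
  calc _ = ∑ p, a p + ∑ q, b q := by simp only [a, b, Fintype.sum_prod_type]
    _ = (∑ q, a (e (.inl q)) + (∑ i, a (e (.inr (.inl i))) + ∑ j, a (e (.inr (.inr j)))))
        + ∑ q, b q := by rw [← he.sum_comp, Fintype.sum_sum_type, Fintype.sum_sum_type]
    _ = φ g := by rw [hdiag, Fintype.sum_congr _ _ hoff, Finset.sum_neg_distrib]; abel

namespace groupCohomology

open Fin CategoryTheory

variable {k G : Type u} [CommRing k] [Group G] (A : Rep k G)

noncomputable def cochainsInsert (t : G) (n : ℕ) : ((Fin (n + 1) → G) → A) →ₗ[k] ((Fin n → G) → A) :=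
  ∑ i : Fin (n + 1), (-1 : k) ^ (i : ℕ) • LinearMap.funLeft k A (insertNth i t)

theorem cochainsInsert_apply (t : G) (n : ℕ) (φ : (Fin (n + 1) → G) → A) (g : Fin n → G) :
    cochainsInsert A t n φ g = ∑ i : Fin (n + 1), (-1 : k) ^ (i : ℕ) • φ (insertNth i t g) := by
  simp [cochainsInsert, LinearMap.funLeft_apply]

theorem cochainsInsert_d_zero (t : G) (φ : (Fin 0 → G) → A) :
    cochainsInsert A t 0 (inhomogeneousCochains.d A 0 φ) = fun g => A.ρ t (φ g) - φ g := by
  funext g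
  simp [cochainsInsert_apply, inhomogeneousCochains.d_hom_apply, Subsingleton.elim _ g,
    sub_eq_add_neg]

theorem cochainsInsert_d_add_d_cochainsInsert {t : G} (ht : t ∈ Subgroup.center G) (n : ℕ)
    (φ : (Fin (n + 1) → G) → A) :
    cochainsInsert A t (n + 1) (inhomogeneousCochains.d A (n + 1) φ) +
        inhomogeneousCochains.d A n (cochainsInsert A t n φ) = fun g => A.ρ t (φ g) - φ g := by
  funext g
  have hhead : ∑ i : Fin (n + 2), (-1 : k) ^ (i : ℕ) •
      A.ρ ((insertNth i t g : Fin (n + 2) → G) 0)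
        (φ fun j => (insertNth i t g : Fin (n + 2) → G) j.succ) =
      A.ρ t (φ g) - A.ρ (g 0) (cochainsInsert A t n φ fun j => g j.succ) := by
    obtain ⟨a, p, rfl⟩ : ∃ a p, g = cons a p := ⟨g 0, tail g, (cons_self_tail g).symm⟩
    simp [Fin.sum_univ_succ, cochainsInsert_apply, pow_succ, sub_eq_add_neg]
  have hcomb := sum_contractNth_insertNth_add_sum_insertNth_contractNth (R := k) t g
    (fun i => Subgroup.mem_center_iff.mp ht (g i)) φ
  simp only [Pi.add_apply, cochainsInsert_apply, inhomogeneousCochains.d_hom_apply, smul_add,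
    Finset.sum_add_distrib, hhead]
  simp only [pow_succ, mul_neg_one, neg_smul, smul_neg, Finset.sum_neg_distrib, Finset.smul_sum,
    smul_smul, neg_mul, ← pow_add]
  linear_combination (norm := module) -hcomb

theorem subsingleton_groupCohomology_of_central_smul {t : G} (ht : t ∈ Subgroup.center G) {c : k}
    (hc : IsUnit (c - 1)) (hρ : A.ρ t = c • LinearMap.id) (n : ℕ) :
    Subsingleton (groupCohomology A n) := by
  have hρφ : ∀ m (φ : (Fin m → G) → A), (fun g => A.ρ t (φ g) - φ g) = (c - 1) • φ := by
    intro m φ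
    funext g
    simp [hρ, sub_smul]
  let K : ∀ i j, (ComplexShape.up ℕ).Rel j i →
      ((inhomogeneousCochains A).X i ⟶ (inhomogeneousCochains A).X j) := fun i j hij =>
    eqToHom (by rw [← hij]) ≫ ModuleCat.ofHom ((↑hc.unit⁻¹ : k) • cochainsInsert A t j)
  have hK : Homotopy.nullHomotopicMap' K = 𝟙 _ := by
    ext m : 1
    rcases m with _ | m
    · rw [Homotopy.nullHomotopicMap'_f_of_not_rel_right (rfl : (ComplexShape.up ℕ).Rel 0 1)
        (fun l => by simp)]
      refine ModuleCat.hom_ext (LinearMap.ext fun φ => ?_)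
      change ((↑hc.unit⁻¹ : k) • cochainsInsert A t 0) (inhomogeneousCochains.d A 0 φ) = φ
      rw [LinearMap.smul_apply, cochainsInsert_d_zero, hρφ, smul_smul, hc.val_inv_mul, one_smul]
    · rw [Homotopy.nullHomotopicMap'_f (rfl : (ComplexShape.up ℕ).Rel m (m + 1)) rfl]
      refine ModuleCat.hom_ext (LinearMap.ext fun φ => ?_)
      simp only [K, CochainComplex.of_d, eqToHom_refl, Category.id_comp, ModuleCat.hom_add,
        ModuleCat.hom_comp, ConcreteCategory.hom_ofHom, LinearMap.add_apply, LinearMap.coe_comp,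
        LinearMap.coe_smul, Function.comp_apply, Pi.smul_apply, map_smul, HomologicalComplex.id_f,
        ModuleCat.hom_id, LinearMap.id_coe, id_eq]
      rw [← smul_add, cochainsInsert_d_add_d_cochainsInsert A ht, hρφ, smul_smul, hc.val_inv_mul,
        one_smul]
  have h := (Homotopy.nullHomotopy' K).homologyMap_eq n
  rw [hK, HomologicalComplex.homologyMap_id, HomologicalComplex.homologyMap_zero] at h
  exact ModuleCat.isZero_iff_subsingleton.mp ((Limits.IsZero.iff_id_eq_zero _).mpr h)

end groupCohomology

open groupCohomology in
theorem subsingleton_groupCohomology_oneDimRep {G : Type} [CommGroup G] {χ : G →* ℂˣ} (hχ : χ ≠ 1)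
    (n : ℕ) : Subsingleton (groupCohomology (Rep.of (oneDimRep G χ)) n) := by
  obtain ⟨t, ht⟩ := DFunLike.ne_iff.mp hχ
  have hc : IsUnit ((χ t : ℂ) - 1) := (sub_ne_zero.mpr (Units.val_eq_one.not.mpr ht)).isUnit
  exact subsingleton_groupCohomology_of_central_smul _
    (Subgroup.mem_center_iff.mpr fun g => mul_comm g t) hc rfl n

theorem nontrivial_groupCohomology_zero_oneDimRep_one (G : Type) [Group G] :
    Nontrivial (groupCohomology (Rep.of (oneDimRep G 1)) 0) := by
  have : (oneDimRep G 1).IsTrivial := ⟨fun g => by simp [oneDimRep]⟩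
  have : Nontrivial (Rep.of (oneDimRep G 1)) := inferInstanceAs (Nontrivial ℂ)
  exact (groupCohomology.H0IsoOfIsTrivial _).toLinearEquiv.toEquiv.nontrivial

theorem stmt10_general (s : ℕ)
    (χ : Multiplicative (Fin s → ℤ) →* ℂˣ) :
    (∀ n : ℕ, Subsingleton (groupCohomology (Rep.of (oneDimRep _ χ)) n)) ↔ χ ≠ 1 := by
  refine ⟨?_, fun hχ => subsingleton_groupCohomology_oneDimRep hχ⟩
  rintro h rfl
  exact not_subsingleton_iff_nontrivial.mpr (nontrivial_groupCohomology_zero_oneDimRep_one _) (h 0)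

/-- Let `s ≥ 1`, `G = ℤ^s` the free abelian group of rank `s` (written multiplicatively),
and `χ : G → ℂˣ` a homomorphism, giving the one-dimensional complex representation `ℂ_χ`.
Then the group cohomology `H^n(G, ℂ_χ)` vanishes for every `n ≥ 0` if and only if `χ` is
not the trivial homomorphism. -/
theorem stmt10 (s : ℕ) (hs : 1 ≤ s)
    (χ : Multiplicative (Fin s → ℤ) →* ℂˣ) :
    (∀ n : ℕ, Subsingleton (groupCohomology (Rep.of (oneDimRep _ χ)) n)) ↔ χ ≠ 1 :=
  stmt10_general s χ
end
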